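/- arXiv:2308.03391 — 5 statements merged into one kernel-verified Lean document; each statement's English description precedes it below -/
import Mathlib

section
/- Let M = [[A, B], [C, A^T]] be a symplectic Wonenburger matrix. If λ is an eigenvalue of M, then a(λ) = (λ + 1/λ)/2 is an eigenvalue of A. -/
open Matrix

/-- If `λ` is an eigenvalue of a symplectic Wonenburger matrix `M = [[A,B],[C,Aᵀ]]`,
then the stability index `a(λ) = (λ + λ⁻¹)/2` is an eigenvalue of `A`. -/
theorem eigenvalue_wonenburger_stability_index (n : ℕ) (A B C : Matrix (Fin n) (Fin n) ℝ)
    (hB : B = Bᵀ) (hC : C = Cᵀ) (hAB : A * B = B * Aᵀ) (hAC : Aᵀ * C = C * A)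
    (hA : A * A - B * C = 1) (lam : ℂ)
    (hev : ∃ v : (Fin n ⊕ Fin n) → ℂ, v ≠ 0 ∧
      ((Matrix.fromBlocks A B C Aᵀ).map Complex.ofReal).mulVec v = lam • v) :
    ∃ w : Fin n → ℂ, w ≠ 0 ∧
      (A.map Complex.ofReal).mulVec w = ((lam + lam⁻¹) / 2) • w := by
  classical
  obtain ⟨v, hv0, hv⟩ := hev
  set φ := (Complex.ofRealHom.mapMatrix : Matrix (Fin n) (Fin n) ℝ →+* Matrix (Fin n) (Fin n) ℂ)
    with hφ
  set A1 : Matrix (Fin n) (Fin n) ℂ := A.map Complex.ofReal with hA1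
  set B1 : Matrix (Fin n) (Fin n) ℂ := B.map Complex.ofReal with hB1
  set C1 : Matrix (Fin n) (Fin n) ℂ := C.map Complex.ofReal with hC1
  have hφA : φ A = A1 := rfl
  have hφB : φ B = B1 := rfl
  have hφC : φ C = C1 := rfl
  have hφAT : φ Aᵀ = A1ᵀ := by
    rw [RingHom.mapMatrix_apply, Matrix.transpose_map]; rfl
  -- complexified relations
  have r1 : A1 * A1 - B1 * C1 = 1 := by
    have := congrArg φ hA
    rwa [_root_.map_sub, _root_.map_mul, _root_.map_mul, _root_.map_one, hφA, hφB, hφC] at this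
  have r2 : A1 * B1 = B1 * A1ᵀ := by
    have := congrArg φ hAB
    rwa [_root_.map_mul, _root_.map_mul, hφA, hφB, hφAT] at this
  have r3 : A1ᵀ * C1 = C1 * A1 := by
    have := congrArg φ hAC
    rwa [_root_.map_mul, _root_.map_mul, hφA, hφC, hφAT] at this
  have r4 : A1ᵀ * A1ᵀ - C1 * B1 = 1 := by
    have := congrArg Matrix.transpose r1
    have hBt : B1ᵀ = B1 := by
      rw [hB1, ← Matrix.transpose_map, ← hB]
    have hCt : C1ᵀ = C1 := by
      rw [hC1, ← Matrix.transpose_map, ← hC]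
    rwa [Matrix.transpose_sub, Matrix.transpose_mul, Matrix.transpose_mul,
      Matrix.transpose_one, hBt, hCt] at this
  -- block matrices over ℂ
  set M1 : Matrix (Fin n ⊕ Fin n) (Fin n ⊕ Fin n) ℂ := Matrix.fromBlocks A1 B1 C1 A1ᵀ with hM1
  set N1 : Matrix (Fin n ⊕ Fin n) (Fin n ⊕ Fin n) ℂ :=
    Matrix.fromBlocks A1 (-B1) (-C1) A1ᵀ with hN1
  have hMmap : (Matrix.fromBlocks A B C Aᵀ).map Complex.ofReal = M1 := by
    rw [hM1, Matrix.fromBlocks_map]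
    congr 1
  rw [hMmap] at hv
  have hNM : N1 * M1 = 1 := by
    rw [hN1, hM1, Matrix.fromBlocks_multiply,
      show (1 : Matrix (Fin n ⊕ Fin n) (Fin n ⊕ Fin n) ℂ)
        = Matrix.fromBlocks 1 0 0 1 from (Matrix.fromBlocks_one).symm,
      Matrix.fromBlocks_inj]
    refine ⟨?_, ?_, ?_, ?_⟩
    · rw [Matrix.neg_mul, ← sub_eq_add_neg]; exact r1
    · simp [Matrix.neg_mul, r2]
    · simp [Matrix.neg_mul, r3]
    · rw [Matrix.neg_mul, neg_add_eq_sub]; exact r4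
  -- λ ≠ 0 and N1.mulVec v = λ⁻¹ • v
  have hNv : lam • N1.mulVec v = v := by
    have := congrArg (fun m => m.mulVec v) hNM
    simpa [← Matrix.mulVec_mulVec, hv, Matrix.mulVec_smul] using this
  have hlam : lam ≠ 0 := by
    intro h
    apply hv0
    rw [h, zero_smul] at hNv
    exact hNv.symm
  have hNv' : N1.mulVec v = lam⁻¹ • v := by
    have := congrArg (fun w => lam⁻¹ • w) hNv
    simpa [smul_smul, inv_mul_cancel₀ hlam] using this
  -- sum
  have hsum : (M1 + N1).mulVec v = (lam + lam⁻¹) • v := by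
    rw [Matrix.add_mulVec, hv, hNv', add_smul]
  have hblocks : M1 + N1 = Matrix.fromBlocks (A1 + A1) 0 0 (A1ᵀ + A1ᵀ) := by
    rw [hM1, hN1, Matrix.fromBlocks_add]
    simp
  set x : Fin n → ℂ := v ∘ Sum.inl with hx
  set y : Fin n → ℂ := v ∘ Sum.inr with hy
  set a : ℂ := (lam + lam⁻¹) / 2 with ha
  have hAx : A1.mulVec x = a • x := by
    funext i
    have := congrFun hsum (Sum.inl i)
    rw [hblocks, Matrix.fromBlocks_mulVec] at this
    simp only [Sum.elim_inl, Matrix.add_mulVec, Matrix.zero_mulVec, Pi.add_apply,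
      Pi.zero_apply, add_zero, Pi.smul_apply] at this
    have h2 : (2 : ℂ) * A1.mulVec x i = (lam + lam⁻¹) * v (Sum.inl i) := by
      rw [two_mul]; simpa [hx] using this
    have : A1.mulVec x i = (lam + lam⁻¹) / 2 * v (Sum.inl i) := by
      linear_combination h2 / 2
    simpa [ha, hx] using this
  have hAy : A1ᵀ.mulVec y = a • y := by
    funext i
    have := congrFun hsum (Sum.inr i)
    rw [hblocks, Matrix.fromBlocks_mulVec] at this
    simp only [Sum.elim_inr, Matrix.add_mulVec, Matrix.zero_mulVec, Pi.add_apply,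
      Pi.zero_apply, zero_add, Pi.smul_apply] at this
    have h2 : (2 : ℂ) * A1ᵀ.mulVec y i = (lam + lam⁻¹) * v (Sum.inr i) := by
      rw [two_mul]; simpa [hy] using this
    have : A1ᵀ.mulVec y i = (lam + lam⁻¹) / 2 * v (Sum.inr i) := by
      linear_combination h2 / 2
    simpa [ha, hy] using this
  by_cases hx0 : x = 0
  · -- then y ≠ 0, use transpose eigenvector to get det = 0
    have hy0 : y ≠ 0 := by
      intro h
      apply hv0
      funext j
      cases j with
      | inl i => exact congrFun hx0 i
      | inr i => exact congrFun h i
    have hker : (A1ᵀ - a • 1).mulVec y = 0 := by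
      rw [Matrix.sub_mulVec, hAy, Matrix.smul_mulVec, Matrix.one_mulVec, sub_self]
    have hdetT : (A1ᵀ - a • 1).det = 0 :=
      Matrix.exists_mulVec_eq_zero_iff.mp ⟨y, hy0, hker⟩
    have hdet : (A1 - a • 1).det = 0 := by
      rw [← Matrix.det_transpose, Matrix.transpose_sub, Matrix.transpose_smul,
        Matrix.transpose_one]
      exact hdetT
    obtain ⟨w, hw0, hw⟩ := Matrix.exists_mulVec_eq_zero_iff.mpr hdet
    refine ⟨w, hw0, ?_⟩
    have : A1.mulVec w - a • w = 0 := by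
      rw [← hw, Matrix.sub_mulVec, Matrix.smul_mulVec, Matrix.one_mulVec]
    have := sub_eq_zero.mp this
    simpa [ha] using this
  · exact ⟨x, hx0, by simpa [ha] using hAx⟩
end

section
/- Let M = [[A, B], [C, A^T]] be a symplectic Wonenburger matrix. If a is a real eigenvalue of A, then λ(a) = a + sqrt(a^2 - 1) is an eigenvalue of M, where for a^2 < 1 the square root is taken as i·sqrt(1 - a^2) (so λ(a) is a complex eigenvalue of modulus 1). -/
open Matrix

/-!
If `A v = a v`, then `u = C v` satisfies `Aᵀ u = a u` (from `Aᵀ C = C A`) and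
`B u = (a² - 1) v` (from `B C = A² - 1`). Hence, for any `s` with `s² = a² - 1`, the vector
`(s v, u)` is an eigenvector of `[[A, B], [C, Aᵀ]]` for `a + s`, unless it vanishes; then
`s = 0` and `C v = 0`, and `(v, 0)` is an eigenvector for `a`.
-/

theorem Sum.smul_elim {α β γ M : Type*} [SMul M γ] (c : M) (x : α → γ) (y : β → γ) :
    c • Sum.elim x y = Sum.elim (c • x) (c • y) := by
  ext (i | i) <;> rfl

namespace Matrix

section CommRing

variable {m n R : Type*} [Fintype m] [Fintype n] [CommRing R]

theorem mulVec_mulVec_eq_sq_sub_one_smul [DecidableEq n] {A B C : Matrix n n R} {v : n → R}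
    {a : R} (hA : A * A - B * C = 1) (hv : A *ᵥ v = a • v) :
    B *ᵥ (C *ᵥ v) = (a ^ 2 - 1) • v := by
  rw [mulVec_mulVec, ← sub_sub_cancel (A * A) (B * C), hA, sub_mulVec, ← mulVec_mulVec, hv,
    mulVec_smul, hv, one_mulVec, smul_smul, sub_smul, one_smul, sq]

theorem transpose_mulVec_mulVec_eq_smul {A C : Matrix n n R} {v : n → R} {a : R}
    (hAC : Aᵀ * C = C * A) (hv : A *ᵥ v = a • v) : Aᵀ *ᵥ (C *ᵥ v) = a • (C *ᵥ v) := by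
  rw [mulVec_mulVec, hAC, ← mulVec_mulVec, hv, mulVec_smul]

theorem fromBlocks_mulVec_sumElim_smul_eq {A : Matrix m m R} {B : Matrix m n R}
    {C : Matrix n m R} {D : Matrix n n R} {v : m → R} {u : n → R} {a s : R}
    (hv : A *ᵥ v = a • v) (hBu : B *ᵥ u = s ^ 2 • v) (hCv : C *ᵥ v = u) (hDu : D *ᵥ u = a • u) :
    fromBlocks A B C D *ᵥ Sum.elim (s • v) u = (a + s) • Sum.elim (s • v) u := by
  rw [fromBlocks_mulVec, Sum.elim_comp_inl, Sum.elim_comp_inr, mulVec_smul, mulVec_smul, hv, hBu,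
    hCv, hDu, Sum.smul_elim]
  congr 1 <;> module

theorem fromBlocks_mulVec_sumElim_zero_eq {A : Matrix m m R} {B : Matrix m n R}
    {C : Matrix n m R} {D : Matrix n n R} {v : m → R} {a : R}
    (hv : A *ᵥ v = a • v) (hCv : C *ᵥ v = 0) :
    fromBlocks A B C D *ᵥ Sum.elim v 0 = a • Sum.elim v 0 := by
  rw [fromBlocks_mulVec, Sum.elim_comp_inl, Sum.elim_comp_inr, mulVec_zero, mulVec_zero, hv, hCv,
    Sum.smul_elim, smul_zero, add_zero, add_zero]

end CommRing

theorem exists_fromBlocks_transpose_mulVec_eq_add_smul {n K : Type*} [Fintype n] [DecidableEq n]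
    [Field K] {A B C : Matrix n n K} (hAC : Aᵀ * C = C * A) (hA : A * A - B * C = 1)
    {v : n → K} {a s : K}
    (hv0 : v ≠ 0) (hv : A *ᵥ v = a • v) (hs : s ^ 2 = a ^ 2 - 1) :
    ∃ w : n ⊕ n → K, w ≠ 0 ∧ fromBlocks A B C Aᵀ *ᵥ w = (a + s) • w := by
  by_cases hdeg : s = 0 ∧ C *ᵥ v = 0
  · obtain ⟨rfl, hCv⟩ := hdeg
    refine ⟨Sum.elim v 0,
      fun h => hv0 (Sum.elim_eq_iff.mp (h.trans Sum.elim_zero_zero.symm)).1, ?_⟩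
    rw [add_zero]
    exact fromBlocks_mulVec_sumElim_zero_eq hv hCv
  · refine ⟨Sum.elim (s • v) (C *ᵥ v), fun h => hdeg ?_, ?_⟩
    · rw [← Sum.elim_zero_zero, Sum.elim_eq_iff, smul_eq_zero] at h
      exact ⟨h.1.resolve_right hv0, h.2⟩
    · exact fromBlocks_mulVec_sumElim_smul_eq hv (hs ▸ mulVec_mulVec_eq_sq_sub_one_smul hA hv) rfl
        (transpose_mulVec_mulVec_eq_smul hAC hv)

end Matrix

theorem stability_index_gives_eigenvalue_general (n : ℕ) (A B C : Matrix (Fin n) (Fin n) ℝ)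
    (hAC : Aᵀ * C = C * A)
    (hA : A * A - B * C = 1) (a : ℝ)
    (hev : ∃ v : Fin n → ℝ, v ≠ 0 ∧ A.mulVec v = a • v) :
    ∃ w : (Fin n ⊕ Fin n) → ℂ, w ≠ 0 ∧
      ((Matrix.fromBlocks A B C Aᵀ).map Complex.ofReal).mulVec w =
        ((a : ℂ) + ((a : ℂ) ^ 2 - 1) ^ ((1 : ℂ) / 2)) • w := by
  obtain ⟨v, hv0, hv⟩ := hev
  set f := Complex.ofRealHom
  have hACℂ : (A.map f)ᵀ * C.map f = C.map f * A.map f := by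
    rw [← transpose_map, ← Matrix.map_mul, hAC, Matrix.map_mul]
  have hAℂ : A.map f * A.map f - B.map f * C.map f = 1 := by
    simpa [Matrix.map_mul, Matrix.map_sub] using congrArg f.mapMatrix hA
  have hvℂ : A.map f *ᵥ (f ∘ v) = (a : ℂ) • (f ∘ v) := by
    ext i; simp [← RingHom.map_mulVec, hv, f]
  have hv0ℂ : f ∘ v ≠ 0 :=
    fun h => hv0 (funext fun i => Complex.ofReal_injective (congrFun h i))
  rw [fromBlocks_map, transpose_map]
  exact exists_fromBlocks_transpose_mulVec_eq_add_smul hACℂ hAℂ hv0ℂ hvℂ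
    (by rw [one_div, Complex.cpow_ofNat_inv_pow])

/-- If `a` is a real eigenvalue of the first block `A` of a symplectic Wonenburger matrix
`M = [[A,B],[C,Aᵀ]]`, then `λ(a) = a + √(a² - 1)` is a (complex) eigenvalue of `M`, where
for `a² < 1` the square root is `i·√(1 - a²)` (the principal complex square root). -/
theorem stability_index_gives_eigenvalue (n : ℕ) (A B C : Matrix (Fin n) (Fin n) ℝ)
    (hB : B = Bᵀ) (hC : C = Cᵀ) (hAB : A * B = B * Aᵀ) (hAC : Aᵀ * C = C * A)
    (hA : A * A - B * C = 1) (a : ℝ)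
    (hev : ∃ v : Fin n → ℝ, v ≠ 0 ∧ A.mulVec v = a • v) :
    ∃ w : (Fin n ⊕ Fin n) → ℂ, w ≠ 0 ∧
      ((Matrix.fromBlocks A B C Aᵀ).map Complex.ofReal).mulVec w =
        ((a : ℂ) + ((a : ℂ) ^ 2 - 1) ^ ((1 : ℂ) / 2)) • w :=
  stability_index_gives_eigenvalue_general n A B C hAC hA a hev
end

section
/- The B-sign is well-defined: Let M = [[A, B], [C, A^T]] be a symplectic Wonenburger matrix, and let a be a real, simple eigenvalue of A with a ≠ ±1. Then for any two eigenvectors v, w of A^T with eigenvalue a, the quantities v^T B v and w^T B w are both nonzero and have the same sign. -/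
open Matrix

open Polynomial LinearMap Module Module.Free

open Matrix Polynomial LinearMap Module Module.Free

lemma pow_mulVec_eig {n : ℕ} (M : Matrix (Fin n) (Fin n) ℝ) (u : Fin n → ℝ) (c : ℝ)
    (h : M.mulVec u = c • u) (k : ℕ) : (M ^ k).mulVec u = c ^ k • u := by
  induction k with
  | zero => simp
  | succ k ih =>
    rw [pow_succ, pow_succ, ← mulVec_mulVec, h, mulVec_smul, ih, smul_smul, mul_comm]

lemma aeval_mulVec_eig {n : ℕ} (M : Matrix (Fin n) (Fin n) ℝ) (u : Fin n → ℝ) (c : ℝ)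
    (h : M.mulVec u = c • u) (q : Polynomial ℝ) :
    (Polynomial.aeval M q).mulVec u = q.eval c • u := by
  induction q using Polynomial.induction_on' with
  | add p r hp hr => rw [map_add, add_mulVec, hp, hr, eval_add, add_smul]
  | monomial k r =>
    rw [aeval_monomial, eval_monomial]
    rw [← smul_eq_mul, algebraMap_smul, smul_mulVec, pow_mulVec_eig M u c h k,
      smul_smul]

lemma charpoly_mul_of_isCompl {K M : Type*} [Field K] [AddCommGroup M] [Module K M]
    [FiniteDimensional K M] (φ : Module.End K M) (V W : Submodule K M) (hVW : IsCompl V W)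
    (hφV : ∀ x ∈ V, φ x ∈ V) (hφW : ∀ x ∈ W, φ x ∈ W) :
    φ.charpoly = (φ.restrict hφV).charpoly * (φ.restrict hφW).charpoly := by
  let F := φ.restrict hφV
  let G := φ.restrict hφW
  let ψ := F.prodMap G
  let e := Submodule.prodEquivOfIsCompl V W hVW
  let bV := chooseBasis K V
  let bW := chooseBasis K W
  let b := bV.prod bW
  have hψ : ψ = e.symm.conj φ := by
    apply b.ext
    simp only [Basis.prod_apply, coe_inl, coe_inr, prodMap_apply, LinearEquiv.conj_apply,
      LinearEquiv.symm_symm, Submodule.coe_prodEquivOfIsCompl, coe_comp, LinearEquiv.coe_coe,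
      Function.comp_apply, coprod_apply, Submodule.coe_subtype, map_add, Sum.forall, Sum.elim_inl,
      map_zero, ZeroMemClass.coe_zero, add_zero, LinearEquiv.eq_symm_apply, and_self,
      Submodule.coe_prodEquivOfIsCompl', restrict_coe_apply, implies_true, Sum.elim_inr, zero_add,
      e, ψ, F, G, b]
  rw [← e.symm.charpoly_conj φ, ← hψ, LinearMap.charpoly_prodMap]

lemma charpoly_smul_one_matrix {m : Type*} [Fintype m] [DecidableEq m] (a : ℝ) :
    (a • (1 : Matrix m m ℝ)).charpoly = (X - C a) ^ Fintype.card m := by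
  rw [Matrix.charpoly, charmatrix]
  have : Matrix.scalar m (X : ℝ[X]) - (C : ℝ →+* ℝ[X]).mapMatrix (a • 1)
      = (X - C a) • (1 : Matrix m m ℝ[X]) := by
    ext i j
    by_cases h : i = j <;>
      simp [h, Matrix.scalar_apply, Matrix.one_apply, Matrix.diagonal_apply]
  rw [this, Matrix.det_smul, det_one, mul_one, Fintype.card]

lemma charpoly_smul_id {V : Type*} [AddCommGroup V] [Module ℝ V] [FiniteDimensional ℝ V]
    (a : ℝ) : (a • (LinearMap.id : V →ₗ[ℝ] V) : Module.End ℝ V).charpoly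
      = (X - C a) ^ finrank ℝ V := by
  let b := chooseBasis ℝ V
  rw [← LinearMap.charpoly_toMatrix _ b]
  have : LinearMap.toMatrix b b (a • (LinearMap.id : V →ₗ[ℝ] V)) = a • 1 := by
    rw [_root_.map_smul, LinearMap.toMatrix_id]
  rw [this, charpoly_smul_one_matrix, finrank_eq_card_chooseBasisIndex]

lemma charpoly_mulVecLin {n : ℕ} (A : Matrix (Fin n) (Fin n) ℝ) :
    LinearMap.charpoly (A.mulVecLin : Module.End ℝ (Fin n → ℝ)) = A.charpoly := by
  rw [← LinearMap.charpoly_toMatrix A.mulVecLin (Pi.basisFun ℝ (Fin n)),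
    LinearMap.toMatrix_eq_toMatrix', ← Matrix.toLin'_apply', LinearMap.toMatrix'_toLin']

/-- Key structural lemma: if `a` is a simple root of the charpoly of `A` and has
an eigenvector, then the eigenspace `K = ker (A - a•1)` is one-dimensional, and
it is disjoint from and complementary to the range of `A - a•1`. -/
lemma simple_eigen_structure {n : ℕ} (A : Matrix (Fin n) (Fin n) ℝ) (a : ℝ)
    (hsimple : A.charpoly.rootMultiplicity a = 1)
    (hKne : LinearMap.ker (A - a • 1).mulVecLin ≠ ⊥) :
    finrank ℝ (LinearMap.ker (A - a • 1).mulVecLin) = 1 ∧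
    LinearMap.ker (A - a • 1).mulVecLin ⊓ LinearMap.range (A - a • 1).mulVecLin = ⊥ ∧
    LinearMap.ker (A - a • 1).mulVecLin ⊔ LinearMap.range (A - a • 1).mulVecLin = ⊤ := by
  classical
  set p := A.charpoly with hp
  have hp0 : p ≠ 0 := A.charpoly_monic.ne_zero
  obtain ⟨q, hfac, hqa⟩ : ∃ q : ℝ[X], (X - C a) * q = p ∧ q.eval a ≠ 0 := by
    refine ⟨p /ₘ ((X - C a) ^ p.rootMultiplicity a), ?_,
      eval_divByMonic_pow_rootMultiplicity_ne_zero a hp0⟩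
    have h := p.pow_mul_divByMonic_rootMultiplicity_eq a
    rw [hsimple, pow_one] at h ⊢
    exact h
  set N : Matrix (Fin n) (Fin n) ℝ := A - a • 1 with hN
  set Q : Matrix (Fin n) (Fin n) ℝ := Polynomial.aeval A q with hQ
  have haevalN : Polynomial.aeval A (X - C a) = N := by
    rw [map_sub, aeval_X, aeval_C, Algebra.algebraMap_eq_smul_one]
  have hNQ : N * Q = 0 := by
    rw [← haevalN, hQ, ← _root_.map_mul, hfac, hp, Matrix.aeval_self_charpoly]
  have hQN : Q * N = 0 := by
    rw [← haevalN, hQ, ← _root_.map_mul, mul_comm q, hfac, hp, Matrix.aeval_self_charpoly]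
  -- eigenvectors: A x = a x for x in K
  have hKeig : ∀ x ∈ LinearMap.ker N.mulVecLin, A.mulVec x = a • x := by
    intro x hx
    have h0 : N.mulVec x = 0 := hx
    rw [hN, sub_mulVec, smul_mulVec, one_mulVec, sub_eq_zero] at h0
    exact h0
  have hQeig : ∀ x ∈ LinearMap.ker N.mulVecLin, Q.mulVec x = q.eval a • x := by
    intro x hx
    exact aeval_mulVec_eig A x a (hKeig x hx) q
  -- range Q = K
  have hrangeQ : LinearMap.range Q.mulVecLin = LinearMap.ker N.mulVecLin := by
    apply le_antisymm
    · rintro _ ⟨y, rfl⟩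
      show N.mulVec (Q.mulVec y) = 0
      rw [mulVec_mulVec, hNQ, zero_mulVec]
    · intro x hx
      refine ⟨(q.eval a)⁻¹ • x, ?_⟩
      show Q.mulVec ((q.eval a)⁻¹ • x) = x
      rw [mulVec_smul, hQeig x hx, smul_smul, inv_mul_cancel₀ hqa, one_smul]
  -- disjointness with range N
  have hdisjR : LinearMap.ker N.mulVecLin ⊓ LinearMap.range N.mulVecLin = ⊥ := by
    rw [eq_bot_iff]
    rintro x hx
    obtain ⟨hxK, hxR⟩ := Submodule.mem_inf.mp hx
    obtain ⟨y, rfl⟩ := hxR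
    have h1 : Q.mulVec (N.mulVec y) = q.eval a • N.mulVec y := hQeig _ hxK
    rw [mulVec_mulVec, hQN, zero_mulVec] at h1
    have h2 : N.mulVec y = 0 := (smul_eq_zero.mp h1.symm).resolve_left hqa
    simp only [Submodule.mem_bot, mulVecLin_apply]
    exact h2
  -- disjointness with ker Q
  have hdisjW : LinearMap.ker N.mulVecLin ⊓ LinearMap.ker Q.mulVecLin = ⊥ := by
    rw [eq_bot_iff]
    rintro x hx
    obtain ⟨hxK, hxW⟩ := Submodule.mem_inf.mp hx
    have h1 : Q.mulVec x = q.eval a • x := hQeig _ hxK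
    have h0 : Q.mulVec x = 0 := hxW
    rw [h0] at h1
    have h2 : x = 0 := (smul_eq_zero.mp h1.symm).resolve_left hqa
    simp only [Submodule.mem_bot]
    exact h2
  have hfinpi : finrank ℝ (Fin n → ℝ) = n := by simp
  have hrnN : finrank ℝ (LinearMap.range N.mulVecLin) +
      finrank ℝ (LinearMap.ker N.mulVecLin) = n := by
    rw [LinearMap.finrank_range_add_finrank_ker, hfinpi]
  have hrnQ : finrank ℝ (LinearMap.ker N.mulVecLin) +
      finrank ℝ (LinearMap.ker Q.mulVecLin) = n := by
    rw [← hrangeQ, LinearMap.finrank_range_add_finrank_ker, hfinpi]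
  -- IsCompl K (ker Q)
  have hsupW : LinearMap.ker N.mulVecLin ⊔ LinearMap.ker Q.mulVecLin = ⊤ := by
    apply Submodule.eq_top_of_finrank_eq
    have h := Submodule.finrank_sup_add_finrank_inf_eq
      (LinearMap.ker N.mulVecLin) (LinearMap.ker Q.mulVecLin)
    rw [hdisjW, finrank_bot, add_zero, hrnQ] at h
    rw [h, hfinpi]
  have hcompl : IsCompl (LinearMap.ker N.mulVecLin) (LinearMap.ker Q.mulVecLin) := by
    constructor
    · rw [disjoint_iff]; exact hdisjW
    · rw [codisjoint_iff]; exact hsupW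
  -- invariance
  have hφK : ∀ x ∈ LinearMap.ker N.mulVecLin, A.mulVecLin x ∈ LinearMap.ker N.mulVecLin := by
    intro x hx
    have hx' : N.mulVec x = 0 := hx
    show N.mulVec (A.mulVec x) = 0
    rw [hKeig x hx, mulVec_smul, hx', smul_zero]
  have hφW : ∀ x ∈ LinearMap.ker Q.mulVecLin, A.mulVecLin x ∈ LinearMap.ker Q.mulVecLin := by
    intro x hx
    have h0 : Q.mulVec x = 0 := hx
    show Q.mulVec (A.mulVec x) = 0
    have hAQ : Q * A = A * Q := by
      have h1 : (Polynomial.aeval A) (q * X) = (Polynomial.aeval A) (X * q) := by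
        rw [mul_comm]
      rw [_root_.map_mul, _root_.map_mul, aeval_X] at h1
      exact h1
    rw [mulVec_mulVec, hAQ, ← mulVec_mulVec, h0, mulVec_zero]
  -- charpoly decomposition
  have hchar := charpoly_mul_of_isCompl (A.mulVecLin : Module.End ℝ (Fin n → ℝ))
    (LinearMap.ker N.mulVecLin) (LinearMap.ker Q.mulVecLin) hcompl hφK hφW
  have hrestr : (A.mulVecLin : Module.End ℝ (Fin n → ℝ)).restrict hφK
      = a • LinearMap.id := by
    apply LinearMap.ext
    intro x
    apply Subtype.ext
    simp only [LinearMap.restrict_coe_apply, LinearMap.smul_apply, LinearMap.id_coe, id_eq,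
      SetLike.val_smul, mulVecLin_apply]
    exact hKeig x.1 x.2
  rw [hrestr, charpoly_smul_id, charpoly_mulVecLin, ← hp] at hchar
  -- root multiplicity count
  set k := finrank ℝ (LinearMap.ker N.mulVecLin) with hk
  have hk1 : k = 1 := by
    have hmul : p.rootMultiplicity a =
        ((X - C a) ^ k).rootMultiplicity a
        + (((A.mulVecLin : Module.End ℝ (Fin n → ℝ)).restrict hφW).charpoly).rootMultiplicity a := by
      rw [hchar] at hp0 ⊢
      exact rootMultiplicity_mul hp0
    rw [hsimple, rootMultiplicity_X_sub_C_pow] at hmul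
    have hkpos : k ≠ 0 := by
      intro h0
      exact hKne (Submodule.finrank_eq_zero.mp (hk ▸ h0))
    omega
  refine ⟨hk1, hdisjR, ?_⟩
  apply Submodule.eq_top_of_finrank_eq
  have h := Submodule.finrank_sup_add_finrank_inf_eq
    (LinearMap.ker N.mulVecLin) (LinearMap.range N.mulVecLin)
  rw [hdisjR, finrank_bot, add_zero] at h
  rw [h, hfinpi, ← hk]
  omega


/-- The B-sign is well-defined: for a symplectic Wonenburger matrix `M = [[A,B],[C,Aᵀ]]`
and a real simple eigenvalue `a ≠ ±1` of `A`, any two eigenvectors `v, w` of `Aᵀ` with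
eigenvalue `a` give nonzero quantities `vᵀBv`, `wᵀBw` of the same sign. -/
theorem b_sign_well_defined (n : ℕ) (A B C : Matrix (Fin n) (Fin n) ℝ)
    (hB : B = Bᵀ) (hC : C = Cᵀ) (hAB : A * B = B * Aᵀ) (hAC : Aᵀ * C = C * A)
    (hA : A * A - B * C = 1) (a : ℝ)
    (hsimple : (Matrix.charpoly A).rootMultiplicity a = 1)
    (ha1 : a ≠ 1) (ha2 : a ≠ -1)
    (v w : Fin n → ℝ) (hv : v ≠ 0) (hw : w ≠ 0)
    (hva : Aᵀ.mulVec v = a • v) (hwa : Aᵀ.mulVec w = a • w) :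
    0 < (v ⬝ᵥ B.mulVec v) * (w ⬝ᵥ B.mulVec w) := by
  classical
  set N : Matrix (Fin n) (Fin n) ℝ := A - a • 1 with hN
  set Nt : Matrix (Fin n) (Fin n) ℝ := Aᵀ - a • 1 with hNt
  have hNT : Nᵀ = Nt := by rw [hN, hNt, transpose_sub, transpose_smul, transpose_one]
  have hker_t : ∀ y : Fin n → ℝ, Aᵀ.mulVec y = a • y → Nt.mulVec y = 0 := by
    intro y hy
    rw [hNt, sub_mulVec, smul_mulVec, one_mulVec, hy, sub_self]
  have hvker : Nt.mulVec v = 0 := hker_t v hva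
  have hwker : Nt.mulVec w = 0 := hker_t w hwa
  -- the eigenspace of A is nontrivial
  have hdetNt : Nt.det = 0 := Matrix.exists_mulVec_eq_zero_iff.mp ⟨v, hv, hvker⟩
  have hdetN : N.det = 0 := by rw [← Matrix.det_transpose, hNT, hdetNt]
  obtain ⟨x, hx0, hxker⟩ := Matrix.exists_mulVec_eq_zero_iff.mpr hdetN
  have hKne : LinearMap.ker N.mulVecLin ≠ ⊥ := by
    rw [Submodule.ne_bot_iff]
    exact ⟨x, hxker, hx0⟩
  obtain ⟨hk1, hdisj, hsup⟩ := simple_eigen_structure A a hsimple hKne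
  rw [← hN] at hk1 hdisj hsup
  -- the eigenspace of Aᵀ is one-dimensional
  have hrankEq : Nt.rank = N.rank := by rw [← hNT, Matrix.rank_transpose]
  have hfinpi : finrank ℝ (Fin n → ℝ) = n := by simp
  have hrnN : finrank ℝ (LinearMap.range N.mulVecLin) +
      finrank ℝ (LinearMap.ker N.mulVecLin) = n := by
    rw [LinearMap.finrank_range_add_finrank_ker, hfinpi]
  have hrnNt : finrank ℝ (LinearMap.range Nt.mulVecLin) +
      finrank ℝ (LinearMap.ker Nt.mulVecLin) = n := by
    rw [LinearMap.finrank_range_add_finrank_ker, hfinpi]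
  have hE1 : finrank ℝ (LinearMap.ker Nt.mulVecLin) = 1 := by
    have h1 : finrank ℝ (LinearMap.range Nt.mulVecLin)
        = finrank ℝ (LinearMap.range N.mulVecLin) := hrankEq
    omega
  -- E = span v
  have hvE : v ∈ LinearMap.ker Nt.mulVecLin := hvker
  have hspanv : Submodule.span ℝ {v} = LinearMap.ker Nt.mulVecLin := by
    apply Submodule.eq_of_le_of_finrank_le
    · rw [Submodule.span_singleton_le_iff_mem]; exact hvE
    · rw [hE1, finrank_span_singleton hv]
  -- w is a multiple of v
  have hwE : w ∈ Submodule.span ℝ {v} := by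
    rw [hspanv]; exact hker_t w hwa
  obtain ⟨c, hc⟩ := Submodule.mem_span_singleton.mp hwE
  have hc0 : c ≠ 0 := by
    rintro rfl
    rw [zero_smul] at hc
    exact hw hc.symm
  -- u = B v is an eigenvector of A
  set u : Fin n → ℝ := B.mulVec v with hu
  have hAu : A.mulVec u = a • u := by
    rw [hu, mulVec_mulVec, hAB, ← mulVec_mulVec, hva, mulVec_smul]
  have huK : u ∈ LinearMap.ker N.mulVecLin := by
    show N.mulVec u = 0
    rw [hN, sub_mulVec, smul_mulVec, one_mulVec, hAu, sub_self]
  -- u ≠ 0, via the eigenvector x of A and the Wonenburger relations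
  have hAx : A.mulVec x = a • x := by
    have h := hxker
    rw [hN, sub_mulVec, smul_mulVec, one_mulVec, sub_eq_zero] at h
    exact h
  have hCxE : C.mulVec x ∈ LinearMap.ker Nt.mulVecLin := by
    apply hker_t
    rw [mulVec_mulVec, hAC, ← mulVec_mulVec, hAx, mulVec_smul]
  have hCxE' : C.mulVec x ∈ Submodule.span ℝ {v} := by rw [hspanv]; exact hCxE
  obtain ⟨μ, hμ⟩ := Submodule.mem_span_singleton.mp hCxE'
  have ha21 : a * a - 1 ≠ 0 := by
    have h1 : a - 1 ≠ 0 := sub_ne_zero.mpr ha1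
    have h2 : a + 1 ≠ 0 := by intro h; exact ha2 (by linarith)
    intro h
    have : (a - 1) * (a + 1) = 0 := by ring_nf; linarith [h]
    rcases mul_eq_zero.mp this with h' | h' <;> [exact h1 h'; exact h2 h']
  have hμu : μ • u = (a * a - 1) • x := by
    have h := congrArg (fun M => M.mulVec x) hA
    simp only [sub_mulVec, one_mulVec, ← mulVec_mulVec] at h
    rw [hAx, mulVec_smul, hAx, ← hμ, mulVec_smul] at h
    have h2 : μ • B.mulVec v = a • a • x - x := by
      rw [sub_eq_iff_eq_add] at h
      rw [h]
      abel
    rw [sub_smul, one_smul, ← smul_smul]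
    exact h2
  have hu0 : u ≠ 0 := by
    intro h
    rw [h, smul_zero] at hμu
    exact hx0 ((smul_eq_zero.mp hμu.symm).resolve_left ha21)
  -- K = span u
  have hspanu : Submodule.span ℝ {u} = LinearMap.ker N.mulVecLin := by
    apply Submodule.eq_of_le_of_finrank_le
    · rw [Submodule.span_singleton_le_iff_mem]; exact huK
    · rw [hk1, finrank_span_singleton hu0]
  -- biorthogonality : v ⬝ᵥ u ≠ 0
  have hvu : v ⬝ᵥ u ≠ 0 := by
    intro h0
    apply hv
    have hall : ∀ y : Fin n → ℝ, v ⬝ᵥ y = 0 := by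
      intro y
      have hy : y ∈ LinearMap.ker N.mulVecLin ⊔ LinearMap.range N.mulVecLin := by
        rw [hsup]; trivial
      obtain ⟨y₁, hy₁, y₂, hy₂, rfl⟩ := Submodule.mem_sup.mp hy
      have hy₁' : y₁ ∈ Submodule.span ℝ {u} := by rw [hspanu]; exact hy₁
      obtain ⟨s, hs⟩ := Submodule.mem_span_singleton.mp hy₁'
      obtain ⟨z, hz⟩ := hy₂
      rw [dotProduct_add, ← hs, ← hz]
      have h1 : v ⬝ᵥ s • u = 0 := by
        rw [dotProduct_smul, h0, smul_zero]
      have h2 : v ⬝ᵥ N.mulVecLin z = 0 := by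
        show v ⬝ᵥ N.mulVec z = 0
        rw [dotProduct_mulVec, ← Matrix.mulVec_transpose, hNT, hvker, zero_dotProduct]
      rw [h1, h2, add_zero]
    have := hall v
    exact (dotProduct_self_eq_zero).mp this
  -- conclude
  have hw2 : w ⬝ᵥ B.mulVec w = c * (c * (v ⬝ᵥ B.mulVec v)) := by
    rw [← hc, smul_dotProduct, mulVec_smul, dotProduct_smul]
    simp [smul_smul, mul_comm]
  have hkey : (v ⬝ᵥ B.mulVec v) * (w ⬝ᵥ B.mulVec w)
      = (c * (v ⬝ᵥ B.mulVec v)) * (c * (v ⬝ᵥ B.mulVec v)) := by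
    rw [hw2]; ring
  rw [hkey]
  apply mul_self_pos.mpr
  exact mul_ne_zero hc0 hvu
end

section
/- Let M = [[A, B], [C, A^T]] be a symplectic Wonenburger matrix and a a real simple eigenvalue of A with a ≠ ±1, with A^T v = a v and A w = a w for nonzero vectors v, w. Then (v^T B v)(w^T C w) has the sign of (a^2 - 1); in particular if |a| < 1 (elliptic case) the B-sign and C-sign are opposite, and if |a| > 1 (hyperbolic case) they agree. -/
/-!
Since `Aᵀ (C w) = C A w = a (C w)` and `a` is a simple eigenvalue of `Aᵀ`, we have `C w = γ v`.
Then `wᵀ C w = γ (v ⬝ w)` and `γ (vᵀ B v) = vᵀ B C w = (a² - 1)(v ⬝ w)` because `BC = A² - 1`,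
so `(vᵀ B v)(wᵀ C w) = (a² - 1)(v ⬝ w)²`. Finally `v ⬝ w ≠ 0`: by the Fitting decomposition the
generalized eigenspace `span {w}` and `range (A - a)` span the whole space, and `v` annihilates
`range (A - a)`.
-/

open Matrix

theorem Module.End.maxGenEigenspace_sup_range_eq_top {R M : Type*} [CommRing R]
    [AddCommGroup M] [Module R M] [IsNoetherian R M] [IsArtinian R M] (φ : Module.End R M)
    (μ : R) : φ.maxGenEigenspace μ ⊔ LinearMap.range (φ - μ • 1) = ⊤ := by
  have hmax : φ.maxGenEigenspace μ = ⨆ k : ℕ, LinearMap.ker ((φ - μ • 1) ^ k) := by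
    simp [← Module.End.iSup_genEigenspace_eq, Module.End.genEigenspace_nat]
  rw [eq_top_iff, ← (LinearMap.isCompl_iSup_ker_pow_iInf_range_pow (φ - μ • 1)).sup_eq_top, hmax]
  exact sup_le_sup_left ((iInf_le _ 1).trans_eq (by rw [pow_one])) _

theorem Module.End.maxGenEigenspace_eq_span_singleton {K V : Type*} [Field K]
    [AddCommGroup V] [Module K V] [FiniteDimensional K V] {φ : Module.End K V} {μ : K} {w : V}
    (hμ : φ.charpoly.rootMultiplicity μ = 1) (hw : φ.HasEigenvector μ w) :
    φ.maxGenEigenspace μ = K ∙ w := by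
  symm
  apply Submodule.eq_of_le_of_finrank_le
  · rw [Submodule.span_singleton_le_iff_mem]
    exact Module.End.eigenspace_le_maxGenEigenspace hw.1
  · rw [LinearMap.finrank_maxGenEigenspace_eq, hμ, finrank_span_singleton hw.2]

namespace Matrix

variable {K ι : Type*} [Field K] [Fintype ι] [DecidableEq ι] {A : Matrix ι ι K} {a : K}
  {v w : ι → K}

theorem maxGenEigenspace_mulVecLin_eq_span_singleton
    (hsimple : A.charpoly.rootMultiplicity a = 1) (hw : w ≠ 0) (hwa : A *ᵥ w = a • w) :
    Module.End.maxGenEigenspace A.mulVecLin a = K ∙ w :=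
  Module.End.maxGenEigenspace_eq_span_singleton (by rwa [charpoly_mulVecLin])
    ⟨Module.End.mem_eigenspace_iff.mpr hwa, hw⟩

theorem mem_span_singleton_of_rootMultiplicity_eq_one
    (hsimple : A.charpoly.rootMultiplicity a = 1) (hw : w ≠ 0) (hwa : A *ᵥ w = a • w)
    {x : ι → K} (hxa : A *ᵥ x = a • x) : x ∈ K ∙ w := by
  rw [← maxGenEigenspace_mulVecLin_eq_span_singleton hsimple hw hwa]
  exact Module.End.eigenspace_le_maxGenEigenspace
    (Module.End.mem_eigenspace_iff (f := A.mulVecLin) |>.mpr hxa)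

theorem dotProduct_ne_zero_of_rootMultiplicity_eq_one
    (hsimple : A.charpoly.rootMultiplicity a = 1) (hv : v ≠ 0) (hw : w ≠ 0)
    (hva : Aᵀ *ᵥ v = a • v) (hwa : A *ᵥ w = a • w) : v ⬝ᵥ w ≠ 0 := by
  intro hvw
  refine hv (dotProduct_eq_zero_iff.mp fun x ↦ ?_)
  have hx : x ∈ Module.End.maxGenEigenspace A.mulVecLin a ⊔
      LinearMap.range (A.mulVecLin - a • 1) := by
    rw [Module.End.maxGenEigenspace_sup_range_eq_top]
    trivial
  rw [maxGenEigenspace_mulVecLin_eq_span_singleton hsimple hw hwa] at hx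
  obtain ⟨_, hy, _, ⟨u, rfl⟩, rfl⟩ := Submodule.mem_sup.mp hx
  obtain ⟨c, rfl⟩ := Submodule.mem_span_singleton.mp hy
  simp [dotProduct_add, hvw, dotProduct_mulVec, ← mulVec_transpose, hva]

theorem dotProduct_mulVec_mul_dotProduct_mulVec_eq {B C : Matrix ι ι K}
    (hAC : Aᵀ * C = C * A) (hA : A * A - B * C = 1)
    (hsimple : A.charpoly.rootMultiplicity a = 1) (hv : v ≠ 0)
    (hva : Aᵀ *ᵥ v = a • v) (hwa : A *ᵥ w = a • w) :
    (v ⬝ᵥ B *ᵥ v) * (w ⬝ᵥ C *ᵥ w) = (a ^ 2 - 1) * (v ⬝ᵥ w) ^ 2 := by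
  have hCw : Aᵀ *ᵥ (C *ᵥ w) = a • (C *ᵥ w) := by
    rw [mulVec_mulVec, hAC, ← mulVec_mulVec, hwa, mulVec_smul]
  obtain ⟨γ, hγ⟩ := Submodule.mem_span_singleton.mp <|
    mem_span_singleton_of_rootMultiplicity_eq_one (by rwa [charpoly_transpose]) hv hva hCw
  have hBCw : B *ᵥ (C *ᵥ w) = (a ^ 2 - 1) • w := by
    rw [mulVec_mulVec, show B * C = A * A - 1 by rw [← hA]; abel, sub_mulVec, ← mulVec_mulVec,
      hwa, mulVec_smul, hwa, one_mulVec, smul_smul, sub_smul, one_smul, sq]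
  calc (v ⬝ᵥ B *ᵥ v) * (w ⬝ᵥ C *ᵥ w) = (v ⬝ᵥ B *ᵥ (C *ᵥ w)) * (v ⬝ᵥ w) := by
        rw [← hγ, mulVec_smul, dotProduct_smul, dotProduct_smul, dotProduct_comm w v,
          smul_eq_mul, smul_eq_mul]
        ring
    _ = (a ^ 2 - 1) * (v ⬝ᵥ w) ^ 2 := by
        rw [hBCw, dotProduct_smul, smul_eq_mul]
        ring

end Matrix

theorem b_sign_c_sign_general (n : ℕ) (A B C : Matrix (Fin n) (Fin n) ℝ)
    (hAC : Aᵀ * C = C * A)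
    (hA : A * A - B * C = 1) (a : ℝ)
    (hsimple : (Matrix.charpoly A).rootMultiplicity a = 1)
    (ha1 : a ≠ 1) (ha2 : a ≠ -1)
    (v w : Fin n → ℝ) (hv : v ≠ 0) (hw : w ≠ 0)
    (hva : Aᵀ.mulVec v = a • v) (hwa : A.mulVec w = a • w) :
    0 < ((v ⬝ᵥ B.mulVec v) * (w ⬝ᵥ C.mulVec w)) * (a ^ 2 - 1) ∧
    (a ^ 2 < 1 → (v ⬝ᵥ B.mulVec v) * (w ⬝ᵥ C.mulVec w) < 0) ∧
    (1 < a ^ 2 → 0 < (v ⬝ᵥ B.mulVec v) * (w ⬝ᵥ C.mulVec w)) := by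
  have hprod := dotProduct_mulVec_mul_dotProduct_mulVec_eq hAC hA hsimple hv hva hwa
  have hvw : 0 < (v ⬝ᵥ w) ^ 2 :=
    sq_pos_of_ne_zero (dotProduct_ne_zero_of_rootMultiplicity_eq_one hsimple hv hw hva hwa)
  have ha : a ^ 2 - 1 ≠ 0 := by
    rw [sub_ne_zero, sq, Ne, mul_self_eq_one_iff, not_or]
    exact ⟨ha1, ha2⟩
  rw [hprod]
  refine ⟨?_, fun h ↦ mul_neg_of_neg_of_pos (by linarith) hvw, fun h ↦ mul_pos (by linarith) hvw⟩
  rw [mul_right_comm, ← sq]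
  exact mul_pos (sq_pos_of_ne_zero ha) hvw

/-- For a symplectic Wonenburger matrix `M = [[A,B],[C,Aᵀ]]` and a real simple eigenvalue
`a ≠ ±1` of `A`, with `Aᵀ v = a v` and `A w = a w` (`v, w ≠ 0`), the product
`(vᵀBv)·(wᵀCw)` has the sign of `a² - 1`: in the elliptic case `|a| < 1` the B-sign and
C-sign are opposite, in the hyperbolic case `|a| > 1` they agree. -/
theorem b_sign_c_sign (n : ℕ) (A B C : Matrix (Fin n) (Fin n) ℝ)
    (hB : B = Bᵀ) (hC : C = Cᵀ) (hAB : A * B = B * Aᵀ) (hAC : Aᵀ * C = C * A)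
    (hA : A * A - B * C = 1) (a : ℝ)
    (hsimple : (Matrix.charpoly A).rootMultiplicity a = 1)
    (ha1 : a ≠ 1) (ha2 : a ≠ -1)
    (v w : Fin n → ℝ) (hv : v ≠ 0) (hw : w ≠ 0)
    (hva : Aᵀ.mulVec v = a • v) (hwa : A.mulVec w = a • w) :
    0 < ((v ⬝ᵥ B.mulVec v) * (w ⬝ᵥ C.mulVec w)) * (a ^ 2 - 1) ∧
    (a ^ 2 < 1 → (v ⬝ᵥ B.mulVec v) * (w ⬝ᵥ C.mulVec w) < 0) ∧
    (1 < a ^ 2 → 0 < (v ⬝ᵥ B.mulVec v) * (w ⬝ᵥ C.mulVec w)) :=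
  b_sign_c_sign_general n A B C hAC hA a hsimple ha1 ha2 v w hv hw hva hwa
end

section
/- Let M ∈ Sp(4) be a real 4×4 symplectic Wonenburger matrix with first block A, and let p = (tr A, det A) ∈ R^2 be its stability point. Then, for φ real, e^{2πiφ} is an eigenvalue of M if and only if det(cos(2πφ)·I - A) = 0, i.e., if and only if cos^2(2πφ) - cos(2πφ)·tr A + det A = 0; equivalently, p lies on the line Γ_φ = {(x, y) : y = cos(2πφ)·x - cos^2(2πφ)}, the line with slope cos(2πφ) tangent to the discriminant parabola {y = x^2/4}. -/
open Matrix

private lemma eig_of_mulVec {c : ℂ} {M : Matrix (Fin 2) (Fin 2) ℂ} {x : Fin 2 → ℂ}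
    (hx : x ≠ 0) (h : M.mulVec x = c • x) : ((c • 1 : Matrix (Fin 2) (Fin 2) ℂ) - M).det = 0 := by
  apply Matrix.exists_mulVec_eq_zero_iff.mp
  refine ⟨x, hx, ?_⟩
  rw [sub_mulVec, Matrix.smul_mulVec, Matrix.one_mulVec, h, sub_self]

/-- For a symplectic Wonenburger matrix `M = [[A,B],[C,Aᵀ]] ∈ Sp(4)` with stability point
`(tr A, det A)`: `e^{2πiφ}` is an eigenvalue of `M` iff
`cos²(2πφ) - cos(2πφ)·tr A + det A = 0`, i.e. iff the stability point lies on the line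
with slope `cos(2πφ)` tangent to the parabola `y = x²/4`. -/
theorem eigenvalue_circle_iff_line (A B C : Matrix (Fin 2) (Fin 2) ℝ)
    (hB : B = Bᵀ) (hC : C = Cᵀ) (hAB : A * B = B * Aᵀ) (hAC : Aᵀ * C = C * A)
    (hA : A * A - B * C = 1) (φ : ℝ) :
    (∃ v : (Fin 2 ⊕ Fin 2) → ℂ, v ≠ 0 ∧
      ((Matrix.fromBlocks A B C Aᵀ).map Complex.ofReal).mulVec v =
        Complex.exp (2 * Real.pi * φ * Complex.I) • v) ↔
    Real.cos (2 * Real.pi * φ) ^ 2 - Real.cos (2 * Real.pi * φ) * A.trace + A.det = 0 := by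
  set t : ℝ := 2 * Real.pi * φ with ht
  set c : ℝ := Real.cos t with hc
  set s : ℝ := Real.sin t with hs
  set lam : ℂ := Complex.exp (2 * Real.pi * φ * Complex.I) with hlamdef
  -- lam = c + s I
  have hlam : lam = (c : ℂ) + (s : ℂ) * Complex.I := by
    rw [hlamdef, show (2 * (Real.pi : ℂ) * (φ : ℂ) * Complex.I) = ((t : ℝ) : ℂ) * Complex.I by
      rw [ht]; push_cast; ring, Complex.exp_mul_I, ← Complex.ofReal_cos, ← Complex.ofReal_sin,
      ← hc, ← hs]
  have hsc : (s : ℂ) ^ 2 + (c : ℂ) ^ 2 = 1 := by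
    rw [hs, hc]
    exact_mod_cast Real.sin_sq_add_cos_sq t
  have hlam2 : lam * lam + 1 = (2 * (c : ℂ)) * lam := by
    rw [hlam]
    linear_combination ((s : ℂ)) ^ 2 * Complex.I_sq - hsc
  have hlamne : lam ≠ 0 := Complex.exp_ne_zero _
  -- complex matrices
  set Ac : Matrix (Fin 2) (Fin 2) ℂ := A.map Complex.ofReal with hAc
  set Bc : Matrix (Fin 2) (Fin 2) ℂ := B.map Complex.ofReal with hBc
  set Cc : Matrix (Fin 2) (Fin 2) ℂ := C.map Complex.ofReal with hCc
  set Kc : Matrix (Fin 2 ⊕ Fin 2) (Fin 2 ⊕ Fin 2) ℂ :=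
    (Matrix.fromBlocks A B C Aᵀ).map Complex.ofReal with hKc
  set Dc : Matrix (Fin 2 ⊕ Fin 2) (Fin 2 ⊕ Fin 2) ℂ :=
    Matrix.fromBlocks Ac 0 0 Acᵀ with hDc
  have hKcblocks : Kc = Matrix.fromBlocks Ac Bc Cc Acᵀ := by
    rw [hKc, hAc, hBc, hCc]
    ext (i | i) (j | j) <;> simp [Matrix.fromBlocks, Matrix.map_apply]
  -- the transposed version of hA
  have hA' : Aᵀ * Aᵀ - C * B = 1 := by
    have h := congrArg Matrix.transpose hA
    rw [Matrix.transpose_sub, Matrix.transpose_mul, Matrix.transpose_mul,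
      Matrix.transpose_one, ← hB, ← hC] at h
    exact h
  -- key real identity: K² + 1 = D K + D K
  have lemma1 : Matrix.fromBlocks A B C Aᵀ * Matrix.fromBlocks A B C Aᵀ + 1
      = Matrix.fromBlocks A 0 0 Aᵀ * Matrix.fromBlocks A B C Aᵀ
        + Matrix.fromBlocks A 0 0 Aᵀ * Matrix.fromBlocks A B C Aᵀ := by
    rw [Matrix.fromBlocks_multiply, Matrix.fromBlocks_multiply, ← Matrix.fromBlocks_one,
      Matrix.fromBlocks_add, Matrix.fromBlocks_add, Matrix.fromBlocks_inj]
    refine ⟨?_, ?_, ?_, ?_⟩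
    · rw [← hA]; noncomm_ring
    · rw [hAB]; noncomm_ring
    · rw [hAC]; noncomm_ring
    · rw [← hA']; noncomm_ring
  -- transfer to ℂ
  have hC1 : Kc * Kc + 1 = Dc * Kc + Dc * Kc := by
    have hmul : ∀ M N : Matrix (Fin 2 ⊕ Fin 2) (Fin 2 ⊕ Fin 2) ℝ,
        (M * N).map Complex.ofReal = M.map Complex.ofReal * N.map Complex.ofReal := fun M N =>
      Matrix.map_mul (f := Complex.ofRealHom)
    have hadd : ∀ M N : Matrix (Fin 2 ⊕ Fin 2) (Fin 2 ⊕ Fin 2) ℝ,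
        (M + N).map Complex.ofReal = M.map Complex.ofReal + N.map Complex.ofReal := fun M N =>
      Matrix.map_add Complex.ofReal (by push_cast; simp) M N
    have hone : (1 : Matrix (Fin 2 ⊕ Fin 2) (Fin 2 ⊕ Fin 2) ℝ).map Complex.ofReal = 1 :=
      Matrix.map_one Complex.ofReal Complex.ofReal_zero Complex.ofReal_one
    have hD : (Matrix.fromBlocks A 0 0 Aᵀ).map Complex.ofReal = Dc := by
      rw [hDc, hAc]
      ext (i | i) (j | j) <;> simp [Matrix.fromBlocks, Matrix.map_apply]
    have h : (Matrix.fromBlocks A B C Aᵀ * Matrix.fromBlocks A B C Aᵀ + 1).map Complex.ofReal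
        = (Matrix.fromBlocks A 0 0 Aᵀ * Matrix.fromBlocks A B C Aᵀ
          + Matrix.fromBlocks A 0 0 Aᵀ * Matrix.fromBlocks A B C Aᵀ).map Complex.ofReal := by
      rw [lemma1]
    rw [hadd, hadd, hone, hmul, hmul, hD, ← hKc] at h
    exact h
  have hAtc : (c : ℂ) • (1 : Matrix (Fin 2) (Fin 2) ℂ) - Acᵀ
      = ((c : ℂ) • (1 : Matrix (Fin 2) (Fin 2) ℂ) - Ac)ᵀ := by
    rw [Matrix.transpose_sub, Matrix.transpose_smul, Matrix.transpose_one]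
  -- det computation
  have hdetline : ((Real.cos (2 * Real.pi * φ) ^ 2 - Real.cos (2 * Real.pi * φ) * A.trace
      + A.det : ℝ) : ℂ) = ((c : ℂ) • (1 : Matrix (Fin 2) (Fin 2) ℂ) - Ac).det := by
    rw [Matrix.det_fin_two, Matrix.trace_fin_two, Matrix.det_fin_two, ← ht, ← hc]
    simp only [Matrix.sub_apply, Matrix.smul_apply, Matrix.one_apply, hAc, Matrix.map_apply]
    push_cast
    norm_num
    ring
  constructor
  · rintro ⟨v, hv0, hv⟩
    -- D v = c v
    have hDv : Dc.mulVec v = (c : ℂ) • v := by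
      have e1 : (Kc * Kc + 1).mulVec v = ((2 * (c : ℂ)) * lam) • v := by
        rw [Matrix.add_mulVec, Matrix.one_mulVec, ← Matrix.mulVec_mulVec, hv,
          Matrix.mulVec_smul, hv, smul_smul, ← hlam2, add_smul, one_smul]
      have e2 : (Dc * Kc + Dc * Kc).mulVec v = (2 * lam) • Dc.mulVec v := by
        rw [Matrix.add_mulVec, ← Matrix.mulVec_mulVec, hv, Matrix.mulVec_smul, two_mul,
          add_smul]
      rw [hC1, e2] at e1
      have h2l : (2 * lam) ≠ 0 := by simp [hlamne]
      apply smul_right_injective ((Fin 2 ⊕ Fin 2) → ℂ) h2l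
      show (2 * lam) • (Dc.mulVec v) = (2 * lam) • ((c : ℂ) • v)
      rw [e1, smul_smul]
      congr 1
      ring
    -- split into blocks
    have hv' : Sum.elim (v ∘ Sum.inl) (v ∘ Sum.inr) = v := Sum.elim_comp_inl_inr v
    rw [← hv', hDc, Matrix.fromBlocks_mulVec, Matrix.zero_mulVec, Matrix.zero_mulVec,
      add_zero, zero_add] at hDv
    have hx : Ac.mulVec (v ∘ Sum.inl) = (c : ℂ) • (v ∘ Sum.inl) := by
      funext i
      have := congrFun hDv (Sum.inl i)
      simpa using this
    have hy : Acᵀ.mulVec (v ∘ Sum.inr) = (c : ℂ) • (v ∘ Sum.inr) := by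
      funext i
      have := congrFun hDv (Sum.inr i)
      simpa using this
    have hdet : ((c : ℂ) • (1 : Matrix (Fin 2) (Fin 2) ℂ) - Ac).det = 0 := by
      by_cases hx0 : (v ∘ Sum.inl) = 0
      · have hy0 : (v ∘ Sum.inr) ≠ 0 := by
          intro hy0
          apply hv0
          funext i
          rcases i with i | i
          · exact congrFun hx0 i
          · exact congrFun hy0 i
        have := eig_of_mulVec hy0 hy
        rwa [hAtc, Matrix.det_transpose] at this
      · exact eig_of_mulVec hx0 hx
    rw [hdet] at hdetline
    exact_mod_cast hdetline
  · intro h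
    -- det (c•1 - Ac) = 0
    have hdA : ((c : ℂ) • (1 : Matrix (Fin 2) (Fin 2) ℂ) - Ac).det = 0 := by
      rw [← hdetline, h]
      norm_num
    -- lam' = conj lam
    set lam' : ℂ := (c : ℂ) - (s : ℂ) * Complex.I with hlam'
    have hconj : (starRingEnd ℂ) lam = lam' := by
      rw [hlam, hlam']
      simp [_root_.map_add, _root_.map_mul, Complex.conj_ofReal, Complex.conj_I]
      ring
    have hmul : lam * lam' = 1 := by
      rw [hlam, hlam']
      linear_combination (-(s : ℂ) ^ 2) * Complex.I_sq + hsc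
    have hsum : lam + lam' = 2 * (c : ℂ) := by rw [hlam, hlam']; ring
    -- factorization identity
    have key : (Kc - lam • 1) * (Kc - lam' • 1)
        = (Dc - (c : ℂ) • 1) * Kc + (Dc - (c : ℂ) • 1) * Kc := by
      have expand : (Kc - lam • 1) * (Kc - lam' • 1)
          = Kc * Kc + (lam * lam') • (1 : Matrix (Fin 2 ⊕ Fin 2) (Fin 2 ⊕ Fin 2) ℂ)
            - ((lam + lam') • Kc) := by
        rw [sub_mul, mul_sub, mul_sub, Matrix.mul_smul, Matrix.mul_smul, mul_one, mul_one,
          Matrix.smul_mul, one_mul, smul_smul, add_smul, mul_comm lam' lam]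
        abel
      rw [expand, hmul, hsum, one_smul, hC1, sub_mul, Matrix.smul_mul, one_mul,
        two_mul, add_smul]
      abel
    -- det of RHS is zero
    have hDcdet : (Dc - (c : ℂ) • 1).det = 0 := by
      have hblk : Dc - (c : ℂ) • (1 : Matrix (Fin 2 ⊕ Fin 2) (Fin 2 ⊕ Fin 2) ℂ)
          = Matrix.fromBlocks (Ac - (c : ℂ) • 1) 0 0 (Acᵀ - (c : ℂ) • 1) := by
        rw [hDc, ← Matrix.fromBlocks_one, Matrix.fromBlocks_smul, sub_eq_add_neg,
          Matrix.fromBlocks_neg, Matrix.fromBlocks_add, Matrix.fromBlocks_inj]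
        refine ⟨by rw [sub_eq_add_neg], by simp, by simp, by rw [sub_eq_add_neg]⟩
      rw [hblk, Matrix.det_fromBlocks_zero₁₂]
      have : (Ac - (c : ℂ) • 1).det = 0 := by
        have h' : (Ac - (c : ℂ) • 1) = -((c : ℂ) • 1 - Ac) := (neg_sub _ _).symm
        rw [h', Matrix.det_neg, hdA]
        ring
      rw [this, zero_mul]
    have hproddet : (Kc - lam • 1).det * (Kc - lam' • 1).det = 0 := by
      rw [← Matrix.det_mul, key, ← two_smul ℂ, Matrix.det_smul, Matrix.det_mul, hDcdet]
      ring
    -- conjugation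
    have hstar : (starRingEnd ℂ) ((Kc - lam • 1).det) = (Kc - lam' • 1).det := by
      rw [RingHom.map_det]
      congr 1
      ext i j
      simp only [RingHom.mapMatrix_apply, Matrix.map_apply, Matrix.sub_apply,
        Matrix.smul_apply, Matrix.one_apply, hKc, smul_eq_mul]
      rw [_root_.map_sub, _root_.map_mul, hconj]
      congr 1
      · exact Complex.conj_ofReal _
      · by_cases hij : i = j <;> simp [hij]
    have hdetK : (Kc - lam • 1).det = 0 := by
      rcases mul_eq_zero.mp hproddet with h0 | h0
      · exact h0
      · rw [← hstar] at h0
        exact (starRingEnd ℂ).injective (by simpa using h0)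
    obtain ⟨v, hv0, hv⟩ := Matrix.exists_mulVec_eq_zero_iff.mpr hdetK
    refine ⟨v, hv0, ?_⟩
    rw [Matrix.sub_mulVec, Matrix.smul_mulVec, Matrix.one_mulVec, sub_eq_zero] at hv
    exact hv
end
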